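/- arXiv:2103.05243 — 5 statements merged into one kernel-verified Lean document; each statement's English description precedes it below -/
import Mathlib

section
/- Fix training inputs X₁,…,Xₙ ∈ S^{d-1} that are pairwise non-parallel (X_i ∦ X_j for i ≠ j). If the normalized initial weights V₀[j]/‖V₀[j]‖₂, j = 1,…,p, are i.i.d. uniform on S^{d-1}, then the probability that the matrix H has full row rank n tends to 1 as p → ∞. -/
open MeasureTheory ProbabilityTheory Real Matrix
open scoped ENNReal RealInnerProductSpace Classical

noncomputable section

/-- The uniform probability measure on the unit sphere of `ℝ^d`, as a measure on `ℝ^d`. -/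
def unifSphere (d : ℕ) : Measure (EuclideanSpace ℝ (Fin d)) :=
  Measure.map Subtype.val
    ((((volume : Measure (EuclideanSpace ℝ (Fin d))).toSphere Set.univ)⁻¹ •
      (volume : Measure (EuclideanSpace ℝ (Fin d))).toSphere))

/-- The feature row vector `h_{V₀,x}`, whose `j`-th block is `1{xᵀV₀[j]>0}·xᵀ`. -/
def hrow {d p : ℕ} (V : Fin p → EuclideanSpace ℝ (Fin d)) (x : EuclideanSpace ℝ (Fin d)) :
    Fin p × Fin d → ℝ :=
  fun jk => if 0 < ⟪x, V jk.1⟫ then x jk.2 else 0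

/-- The matrix `H` whose `i`-th row is `h_{V₀,X_i}`. -/
def Hmat {d n p : ℕ} (V : Fin p → EuclideanSpace ℝ (Fin d))
    (X : Fin n → EuclideanSpace ℝ (Fin d)) : Matrix (Fin n) (Fin p × Fin d) ℝ :=
  Matrix.of fun i => hrow V (X i)

/-- The learned function `f̂^{ℓ2}(x) = h_{V₀,x} Hᵀ (HHᵀ)⁻¹ y`,
the minimum ℓ₂-norm overfitting solution. -/
def fhat {d n p : ℕ} (V : Fin p → EuclideanSpace ℝ (Fin d))
    (X : Fin n → EuclideanSpace ℝ (Fin d)) (y : Fin n → ℝ)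
    (x : EuclideanSpace ℝ (Fin d)) : ℝ :=
  hrow V x ⬝ᵥ ((Hmat V X)ᵀ *ᵥ ((Hmat V X * (Hmat V X)ᵀ)⁻¹ *ᵥ y))

/-- Normalized direction of a vector. -/
def dir {d : ℕ} (v : EuclideanSpace ℝ (Fin d)) : EuclideanSpace ℝ (Fin d) := ‖v‖⁻¹ • v

/-!
Fix `i`. Since `X i` is parallel to no other input, some `v ⊥ X i` lies on no hyperplane
`(X k)ᗮ` with `k ≠ i`; pushing `v` slightly to either side of `(X i)ᗮ` gives points `u, u'` whose
ReLU activation patterns on the inputs differ exactly at `i`. If two weights `V j, V j'` share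
these patterns, the columns `(j, m)` and `(j', m)` of `H` differ by `X i m` in row `i` alone, so a
vanishing combination of the rows of `H` has `i`-th coefficient zero. The cones of weights sharing
the pattern of `u` or of `u'` are open and meet the sphere, so they have positive uniform measure
`q`, and each of these `2n` cones is missed by all of `p` i.i.d. weights with probability
`(1 - q) ^ p → 0`.
-/

open Filter Topology

section ActivationCell

variable {E ι : Type*} [NormedAddCommGroup E] [InnerProductSpace ℝ E]

theorem exists_inner_eq_zero_and_forall_inner_ne_zero [Finite ι] (x : E) (y : ι → E)
    (hy : ∀ k, y k ∉ ℝ ∙ x) : ∃ v, ⟪x, v⟫ = 0 ∧ ∀ k, ⟪y k, v⟫ ≠ 0 := by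
  obtain ⟨v, hv, hyv⟩ := Module.Dual.exists_forall_mem_ne_zero_of_forall_exists (ℝ ∙ x)ᗮ
    (fun k => innerₛₗ ℝ (y k)) fun k => by
      by_contra! h
      refine hy k ?_
      rw [← Submodule.orthogonal_orthogonal (ℝ ∙ x), Submodule.mem_orthogonal]
      exact fun w hw => by simpa [real_inner_comm] using h w hw
  exact ⟨v, Submodule.mem_orthogonal_singleton_iff_inner_right.1 hv, hyv⟩

def ActivationFlipAt (X : ι → E) (i : ι) (w w' : E) : Prop :=
  0 < ⟪X i, w⟫ ∧ ¬ 0 < ⟪X i, w'⟫ ∧ ∀ k ≠ i, (0 < ⟪X k, w⟫ ↔ 0 < ⟪X k, w'⟫)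

theorem exists_activationFlipAt [Finite ι] (X : ι → E) (i : ι) (hXi : X i ≠ 0)
    (hX : ∀ k ≠ i, X k ∉ ℝ ∙ X i) :
    ∃ u u', (∀ k, ⟪X k, u⟫ ≠ 0) ∧ (∀ k, ⟪X k, u'⟫ ≠ 0) ∧ ActivationFlipAt X i u u' := by
  obtain ⟨v, hvi, hv⟩ := exists_inner_eq_zero_and_forall_inner_ne_zero (X i)
    (fun k : {k // k ≠ i} => X k) fun k => hX k k.2
  have hnear :
      ∀ᶠ t in 𝓝 (0 : ℝ), ∀ k : {k // k ≠ i}, 0 < ⟪X k, v + t • X i⟫ * ⟪X k, v⟫ :=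
    eventually_all.2 fun k =>
      Tendsto.eventually_const_lt (by simpa using mul_self_pos.2 (hv k))
        (Continuous.tendsto (by fun_prop) 0)
  have hinner_i (t : ℝ) : ⟪X i, v + t • X i⟫ = t * ⟪X i, X i⟫ := by
    rw [inner_add_right, real_inner_smul_right, hvi, zero_add]
  have hXi_pos : 0 < ⟪X i, X i⟫ := real_inner_self_pos.2 hXi
  have hne {t : ℝ} (ht0 : t ≠ 0)
      (ht : ∀ k : {k // k ≠ i}, 0 < ⟪X k, v + t • X i⟫ * ⟪X k, v⟫) (k : ι) :
      ⟪X k, v + t • X i⟫ ≠ 0 := by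
    by_cases hki : k = i
    · subst hki
      rw [hinner_i]
      exact mul_ne_zero ht0 hXi_pos.ne'
    · exact left_ne_zero_of_mul (ht ⟨k, hki⟩).ne'
  obtain ⟨t, ht, ht_pos⟩ := ((hnear.filter_mono nhdsWithin_le_nhds).and
    (self_mem_nhdsWithin : ∀ᶠ t in 𝓝[>] (0 : ℝ), 0 < t)).exists
  obtain ⟨t', ht', ht'_neg⟩ := ((hnear.filter_mono nhdsWithin_le_nhds).and
    (self_mem_nhdsWithin : ∀ᶠ t in 𝓝[<] (0 : ℝ), t < 0)).exists
  refine ⟨v + t • X i, v + t' • X i, hne ht_pos.ne' ht, hne ht'_neg.ne ht', ?_, ?_,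
    fun k hk => (pos_iff_pos_of_mul_pos (ht ⟨k, hk⟩)).trans
      (pos_iff_pos_of_mul_pos (ht' ⟨k, hk⟩)).symm⟩
  · rw [hinner_i]
    exact mul_pos ht_pos hXi_pos
  · rw [hinner_i, not_lt]
    exact (mul_neg_of_neg_of_pos ht'_neg hXi_pos).le

def activationCell (X : ι → E) (u : E) : Set E :=
  {w | ∀ k, 0 < ⟪X k, w⟫ * ⟪X k, u⟫}

variable {X : ι → E} {u w : E}

theorem isOpen_activationCell [Finite ι] (X : ι → E) (u : E) :
    IsOpen (activationCell X u) := by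
  simp only [activationCell, Set.ofPred_forall]
  exact isOpen_iInter_of_finite fun k => isOpen_lt continuous_const (by fun_prop)

theorem self_mem_activationCell (hu : ∀ k, ⟪X k, u⟫ ≠ 0) : u ∈ activationCell X u :=
  fun k => mul_self_pos.2 (hu k)

theorem smul_mem_activationCell {c : ℝ} (hc : 0 < c) (hw : w ∈ activationCell X u) :
    c • w ∈ activationCell X u := fun k => by
  rw [real_inner_smul_right, mul_assoc]
  exact mul_pos hc (hw k)

theorem mem_activationCell_of_smul_mem {c : ℝ} (hc : 0 ≤ c) (hw : c • w ∈ activationCell X u) :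
    w ∈ activationCell X u := fun k => by
  have hk := hw k
  rw [real_inner_smul_right, mul_assoc] at hk
  exact pos_of_mul_pos_right hk hc

theorem pos_inner_iff_of_mem_activationCell (hw : w ∈ activationCell X u) (k : ι) :
    0 < ⟪X k, w⟫ ↔ 0 < ⟪X k, u⟫ :=
  pos_iff_pos_of_mul_pos (hw k)

theorem ActivationFlipAt.of_mem_activationCell {i : ι} {u' w' : E}
    (h : ActivationFlipAt X i u u') (hw : w ∈ activationCell X u)
    (hw' : w' ∈ activationCell X u') : ActivationFlipAt X i w w' := by
  obtain ⟨hi, hi', hk⟩ := h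
  exact ⟨(pos_inner_iff_of_mem_activationCell hw i).2 hi,
    (pos_inner_iff_of_mem_activationCell hw' i).not.2 hi', fun k hki =>
      (pos_inner_iff_of_mem_activationCell hw k).trans
        ((hk k hki).trans (pos_inner_iff_of_mem_activationCell hw' k).symm)⟩

end ActivationCell

theorem rank_Hmat_eq_of_forall_activationFlipAt {d n p : ℕ}
    {V : Fin p → EuclideanSpace ℝ (Fin d)} {X : Fin n → EuclideanSpace ℝ (Fin d)}
    (hX : ∀ i, X i ≠ 0) (hflip : ∀ i, ∃ j j', ActivationFlipAt X i (V j) (V j')) :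
    (Hmat V X).rank = n := by
  suffices hli : LinearIndependent ℝ (Hmat V X).row by
    rw [hli.rank_matrix, Fintype.card_fin]
  refine Fintype.linearIndependent_iff.2 fun g hg i => ?_
  obtain ⟨j, j', hi, hi', hk⟩ := hflip i
  -- the difference of the columns `(j, m)` and `(j', m)` of `H` is `X i m` in row `i` only
  have hgX : g i • X i = 0 := by
    ext m
    have hcol := congrFun hg (j, m)
    have hcol' := congrFun hg (j', m)
    simp only [Matrix.row, Hmat, hrow, Finset.sum_apply, Pi.smul_apply, smul_eq_mul,
      Matrix.of_apply, Pi.zero_apply] at hcol hcol'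
    have hdiff (k : Fin n) : g k * ((if 0 < ⟪X k, V j⟫ then X k m else 0) -
        (if 0 < ⟪X k, V j'⟫ then X k m else 0)) = if k = i then g i * X i m else 0 := by
      by_cases hki : k = i
      · subst hki
        simp [hi, hi']
      · simp [hki, hk k hki]
    have := Finset.sum_congr rfl fun k (_ : k ∈ Finset.univ) => hdiff k
    simp_rw [mul_sub, Finset.sum_sub_distrib, hcol, hcol', sub_zero, Finset.sum_ite_eq'] at this
    simpa using this.symm
  exact (smul_eq_zero.1 hgX).resolve_right (hX i)

theorem unifSphere_pos_of_isOpen {d : ℕ} {U : Set (EuclideanSpace ℝ (Fin d))} (hU : IsOpen U)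
    {x : EuclideanSpace ℝ (Fin d)} (hxU : x ∈ U) (hx : ‖x‖ = 1) : 0 < unifSphere d U := by
  rw [unifSphere, Measure.map_apply measurable_subtype_coe hU.measurableSet, Measure.smul_apply,
    smul_eq_mul]
  exact ENNReal.mul_pos (ENNReal.inv_ne_zero.2 (measure_ne_top _ _))
    ((hU.preimage continuous_subtype_val).measure_pos _
      ⟨⟨x, mem_sphere_zero_iff_norm.2 hx⟩, hxU⟩).ne'

theorem unifSphere_activationCell_pos {d : ℕ} {ι : Type*} [Finite ι]
    {X : ι → EuclideanSpace ℝ (Fin d)} {u : EuclideanSpace ℝ (Fin d)}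
    (hu : ∀ k, ⟪X k, u⟫ ≠ 0) (hu0 : u ≠ 0) : 0 < unifSphere d (activationCell X u) :=
  unifSphere_pos_of_isOpen (isOpen_activationCell X u)
    (smul_mem_activationCell (inv_pos.2 (norm_pos_iff.2 hu0)) (self_mem_activationCell hu))
    (norm_smul_inv_norm hu0)

theorem measurable_dir {d : ℕ} : Measurable (dir : EuclideanSpace ℝ (Fin d) → _) :=
  measurable_norm.inv.smul measurable_id

section Sampling

variable {Ω E : Type*} [MeasurableSpace Ω] [MeasurableSpace E] {P : Measure Ω} {μ : Measure E}
  {W : ℕ → Ω → E}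

theorem ProbabilityTheory.iIndepFun.measure_iInter_range_preimage_eq_pow (hind : iIndepFun W P)
    (hW : ∀ j, AEMeasurable (W j) P) (hlaw : ∀ j, P.map (W j) = μ) {s : Set E}
    (hs : MeasurableSet s) (p : ℕ) :
    P (⋂ j ∈ Finset.range p, W j ⁻¹' s) = μ s ^ p := by
  rw [hind.measure_inter_preimage_eq_mul (Finset.range p) (sets := fun _ => s) fun _ _ => hs]
  simp_rw [← Measure.map_apply_of_aemeasurable (hW _) hs, hlaw, Finset.prod_const,
    Finset.card_range]

theorem tendsto_measure_one_of_tendsto_measure_compl_zero [IsProbabilityMeasure P] {β : Type*}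
    {l : Filter β} {G : β → Set Ω} (h : Tendsto (fun b => P (G b)ᶜ) l (𝓝 0)) :
    Tendsto (fun b => P (G b)) l (𝓝 1) := by
  have hlow (b : β) : 1 - P (G b)ᶜ ≤ P (G b) := by
    rw [tsub_le_iff_right, ← measure_univ (μ := P), ← Set.union_compl_self (G b)]
    exact measure_union_le _ _
  refine tendsto_of_tendsto_of_tendsto_of_le_of_le ?_ tendsto_const_nhds hlow fun _ => prob_le_one
  simpa using ENNReal.Tendsto.sub tendsto_const_nhds h (Or.inl ENNReal.one_ne_top)

theorem ProbabilityTheory.iIndepFun.tendsto_measure_forall_exists_lt_mem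
    [IsProbabilityMeasure P] {κ : Type*} [Fintype κ] (hind : iIndepFun W P)
    (hW : ∀ j, AEMeasurable (W j) P) (hlaw : ∀ j, P.map (W j) = μ) {C : κ → Set E}
    (hC : ∀ c, MeasurableSet (C c)) (hCpos : ∀ c, 0 < μ (C c)) :
    Tendsto (fun p => P {ω | ∀ c, ∃ j < p, W j ω ∈ C c}) atTop (𝓝 1) := by
  have : IsProbabilityMeasure μ := hlaw 0 ▸ Measure.isProbabilityMeasure_map (hW 0)
  have hmiss (c : κ) :
      Tendsto (fun p => P (⋂ j ∈ Finset.range p, W j ⁻¹' (C c)ᶜ)) atTop (𝓝 0) := by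
    simp_rw [hind.measure_iInter_range_preimage_eq_pow hW hlaw (hC c).compl]
    refine ENNReal.tendsto_pow_atTop_nhds_zero_of_lt_one ?_
    rw [prob_compl_eq_one_sub (hC c)]
    exact ENNReal.sub_lt_self ENNReal.one_ne_top one_ne_zero (hCpos c).ne'
  refine tendsto_measure_one_of_tendsto_measure_compl_zero
    (tendsto_of_tendsto_of_tendsto_of_le_of_le tendsto_const_nhds
      (by simpa using tendsto_finsetSum Finset.univ fun c _ => hmiss c) (fun _ => zero_le)
      fun p => (measure_mono fun ω hω => ?_).trans (measure_iUnion_fintype_le _ _))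
  simpa using hω

end Sampling

theorem Hmat_full_rank_in_probability_general
    (d n : ℕ)
    (X : Fin n → EuclideanSpace ℝ (Fin d))
    (hX : ∀ i, X i ∈ Metric.sphere (0 : EuclideanSpace ℝ (Fin d)) 1)
    (hXpar : ∀ i j, i ≠ j → ∀ c : ℝ, X i ≠ c • X j)
    {Ω : Type*} [MeasureSpace Ω] [IsProbabilityMeasure (ℙ : Measure Ω)]
    (V : ℕ → Ω → EuclideanSpace ℝ (Fin d))
    (hVmeas : ∀ j, Measurable (V j))
    (hindep : iIndepFun (fun j ω => dir (V j ω)) ℙ)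
    (hVdist : ∀ j, Measure.map (fun ω => dir (V j ω)) ℙ = unifSphere d) :
    Filter.Tendsto
      (fun p : ℕ => ℙ {ω | (Hmat (fun j : Fin p => V j ω) X).rank = n})
      Filter.atTop (nhds 1) := by
  have hX0 (i : Fin n) : X i ≠ 0 := ne_zero_of_mem_unit_sphere ⟨X i, hX i⟩
  have hXspan (i k : Fin n) (hk : k ≠ i) : X k ∉ ℝ ∙ X i := fun hmem => by
    obtain ⟨c, hc⟩ := Submodule.mem_span_singleton.1 hmem
    exact hXpar k i hk c hc.symm
  choose u u' hu hu' hflip using fun i => exists_activationFlipAt X i (hX0 i) (hXspan i)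
  let C : Fin n ⊕ Fin n → Set (EuclideanSpace ℝ (Fin d)) :=
    Sum.elim (fun i => activationCell X (u i)) fun i => activationCell X (u' i)
  have hC_pos : ∀ c, 0 < unifSphere d (C c) := by
    rintro (i | i)
    · exact unifSphere_activationCell_pos (hu i) fun h => hu i i (by simp [h])
    · exact unifSphere_activationCell_pos (hu' i) fun h => hu' i i (by simp [h])
  have hC_meas (c : Fin n ⊕ Fin n) : MeasurableSet (C c) := by
    rcases c with i | i <;> exact (isOpen_activationCell X _).measurableSet
  have hhit := hindep.tendsto_measure_forall_exists_lt_mem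
    (fun j => (measurable_dir.comp (hVmeas j)).aemeasurable) hVdist hC_meas hC_pos
  refine tendsto_of_tendsto_of_tendsto_of_le_of_le hhit tendsto_const_nhds
    (fun p => measure_mono fun ω hω => ?_) fun p => prob_le_one
  refine rank_Hmat_eq_of_forall_activationFlipAt hX0 fun i => ?_
  obtain ⟨j, hj, hjC⟩ := hω (.inl i)
  obtain ⟨j', hj', hj'C⟩ := hω (.inr i)
  exact ⟨⟨j, hj⟩, ⟨j', hj'⟩, (hflip i).of_mem_activationCell
    (mem_activationCell_of_smul_mem (inv_nonneg.2 (norm_nonneg _)) hjC)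
    (mem_activationCell_of_smul_mem (inv_nonneg.2 (norm_nonneg _)) hj'C)⟩

/-- **Lemma (full row rank)**: for fixed pairwise non-parallel training inputs on the
sphere and i.i.d. uniformly distributed directions of the initial weights, the probability
that `H` has full row rank `n` tends to `1` as `p → ∞`. -/
theorem Hmat_full_rank_in_probability
    (d n : ℕ) (hd2 : 2 ≤ d)
    (X : Fin n → EuclideanSpace ℝ (Fin d))
    (hX : ∀ i, X i ∈ Metric.sphere (0 : EuclideanSpace ℝ (Fin d)) 1)
    (hXpar : ∀ i j, i ≠ j → ∀ c : ℝ, X i ≠ c • X j)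
    {Ω : Type*} [MeasureSpace Ω] [IsProbabilityMeasure (ℙ : Measure Ω)]
    (V : ℕ → Ω → EuclideanSpace ℝ (Fin d))
    (hVmeas : ∀ j, Measurable (V j))
    (hindep : iIndepFun (fun j ω => dir (V j ω)) ℙ)
    (hVdist : ∀ j, Measure.map (fun ω => dir (V j ω)) ℙ = unifSphere d) :
    Filter.Tendsto
      (fun p : ℕ => ℙ {ω | (Hmat (fun j : Fin p => V j ω) X).rank = n})
      Filter.atTop (nhds 1) :=
  Hmat_full_rank_in_probability_general d n X hX hXpar V hVmeas hindep hVdist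

end
end

section
/- Let H ∈ ℝ^{n×dp} and y ∈ ℝⁿ with HHᵀ invertible. Consider the gradient-descent iterates ΔV_0 = 0 and ΔV_{k+1} = ΔV_k − γ_k·Σ_{i=1}^n (H_i·ΔV_k − y_i)·H_iᵀ, where H_i denotes the i-th row of H and γ_k ∈ ℝ are arbitrary step sizes. If the iterates converge to a limit ΔV_∞ satisfying H·ΔV_∞ = y, then ΔV_∞ = Hᵀ·(HHᵀ)⁻¹·y, i.e., gradient descent converges to the minimum-ℓ₂-norm interpolating solution. -/
/-!
Every gradient step adds a combination of the rows of `H`, so all iterates, and hence (the row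
space being closed) their limit, lie in the row space `{Hᵀ c}`. An interpolating vector `Hᵀ c`
satisfies `H Hᵀ c = y`, which pins down `c = (H Hᵀ)⁻¹ y`.
-/

open Matrix

section RowSpace

variable {ι m R : Type*} [Fintype ι] [Fintype m] [CommRing R]

theorem gradientDescent_mem_range_vecMulLinear (H : Matrix ι m R) (y : ι → R) (γ : ℕ → R)
    (ΔV : ℕ → m → R) (h0 : ΔV 0 = 0)
    (hstep : ∀ k, ΔV (k + 1) =
      ΔV k - γ k • ∑ i : ι, ((H *ᵥ ΔV k) i - y i) • H i) (k : ℕ) :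
    ΔV k ∈ LinearMap.range H.vecMulLinear := by
  induction k with
  | zero => rw [h0]; exact zero_mem _
  | succ k ih =>
    have hgrad : ∑ i : ι, ((H *ᵥ ΔV k) i - y i) • H i ∈ LinearMap.range H.vecMulLinear :=
      ⟨H *ᵥ ΔV k - y, vecMul_eq_sum _ _⟩
    rw [hstep k]
    exact sub_mem ih (Submodule.smul_mem _ _ hgrad)

theorem eq_transpose_mulVec_inv_mulVec_of_mem_range_vecMulLinear [DecidableEq ι]
    (H : Matrix ι m R) (hinv : IsUnit (H * Hᵀ).det) {L : m → R}
    (hL : L ∈ LinearMap.range H.vecMulLinear) :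
    L = Hᵀ *ᵥ ((H * Hᵀ)⁻¹ *ᵥ (H *ᵥ L)) := by
  obtain ⟨c, rfl⟩ := hL
  have hc : H.vecMulLinear c = Hᵀ *ᵥ c := (mulVec_transpose H c).symm
  rw [hc, mulVec_mulVec c H, mulVec_mulVec c, nonsing_inv_mul _ hinv, one_mulVec]

end RowSpace

/-- **Lemma (gradient descent converges to the minimum ℓ₂-norm solution)**: if the
gradient-descent iterates `ΔV_0 = 0`,
`ΔV_{k+1} = ΔV_k − γ_k·Σ_i (H_i·ΔV_k − y_i)·H_iᵀ` converge to a limit interpolating the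
data (`H·ΔV_∞ = y`), then the limit is `Hᵀ(HHᵀ)⁻¹y`. -/
theorem gradient_descent_limit_eq_min_norm_solution
    {n : ℕ} {m : Type*} [Fintype m]
    (H : Matrix (Fin n) m ℝ) (y : Fin n → ℝ)
    (hinv : IsUnit (H * Hᵀ).det)
    (γ : ℕ → ℝ) (ΔV : ℕ → m → ℝ)
    (h0 : ΔV 0 = 0)
    (hstep : ∀ k, ΔV (k + 1) =
      ΔV k - γ k • ∑ i : Fin n, ((H *ᵥ ΔV k) i - y i) • (fun j => H i j))
    (L : m → ℝ)
    (hconv : Filter.Tendsto ΔV Filter.atTop (nhds L))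
    (hinterp : H *ᵥ L = y) :
    L = Hᵀ *ᵥ ((H * Hᵀ)⁻¹ *ᵥ y) := by
  have hL : L ∈ LinearMap.range H.vecMulLinear :=
    (Submodule.closed_of_finiteDimensional _).mem_of_tendsto hconv
      (Filter.Eventually.of_forall (gradientDescent_mem_range_vecMulLinear H y γ ΔV h0 hstep))
  rw [← hinterp]
  exact eq_transpose_mulVec_inv_mulVec_of_mem_range_vecMulLinear H hinv hL
end

section
/- For every integer d ≥ 2, the Beta value B((d−1)/2, 1/2) lies in the interval [1/√d, π]. Moreover, if d ≥ 5, then B((d−1)/2, 1/2) lies in the interval [1/√d, 4/√(d−3)]. -/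
open Real

noncomputable section

/-- The Beta function `B(a,b) = ∫₀¹ t^{a−1}(1−t)^{b−1} dt`. -/
def Beta (a b : ℝ) : ℝ := ∫ t in (0 : ℝ)..1, t ^ (a - 1) * (1 - t) ^ (b - 1)

/-!
By `B(x, 1/2) = Γ(x) Γ(1/2) / Γ(x + 1/2)` and `Γ(1/2)² = π`, consecutive values satisfy
`B(x, 1/2) B(x + 1/2, 1/2) = π / x`. Since `B(·, 1/2)` is decreasing, this squeezes `B(x, 1/2)²`
between `π / x` and `π / (x - 1/2)`. For `x = (d - 1)/2` these are `2π/(d - 1) ≥ 1/d` and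
`2π/(d - 2)`, which is at most `π²` for `d ≥ 3` and at most `16/(d - 3)` for `d ≥ 5`;
for `d = 2` the value is `B(1/2, 1/2) = π`.
-/

open MeasureTheory

lemma betaIntegrand_ofReal (a b : ℝ) {t : ℝ} (ht : t ∈ Set.Icc (0 : ℝ) 1) :
    (t : ℂ) ^ ((a : ℂ) - 1) * (1 - (t : ℂ)) ^ ((b : ℂ) - 1) =
      ((t ^ (a - 1) * (1 - t) ^ (b - 1) : ℝ) : ℂ) := by
  push_cast [Complex.ofReal_cpow ht.1, Complex.ofReal_cpow (sub_nonneg.2 ht.2)]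
  rfl

lemma ofReal_Beta (a b : ℝ) : (Beta a b : ℂ) = Complex.betaIntegral a b := by
  rw [Beta, Complex.betaIntegral, ← intervalIntegral.integral_ofReal]
  refine intervalIntegral.integral_congr fun t ht => ?_
  rw [Set.uIcc_of_le zero_le_one] at ht
  exact (betaIntegrand_ofReal a b ht).symm

lemma Beta_eq_beta {a b : ℝ} (ha : 0 < a) (hb : 0 < b) :
    Beta a b = ProbabilityTheory.beta a b := by
  rw [ProbabilityTheory.beta_eq_betaIntegralReal a b ha hb, ← ofReal_Beta, Complex.ofReal_re]

lemma Beta_pos {a b : ℝ} (ha : 0 < a) (hb : 0 < b) : 0 < Beta a b :=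
  Beta_eq_beta ha hb ▸ ProbabilityTheory.beta_pos ha hb

lemma intervalIntegrable_betaIntegrand {a b : ℝ} (ha : 0 < a) (hb : 0 < b) :
    IntervalIntegrable (fun t : ℝ => t ^ (a - 1) * (1 - t) ^ (b - 1)) volume 0 1 := by
  have hc := Complex.betaIntegral_convergent (u := a) (v := b) (by simpa) (by simpa)
  refine (show IntervalIntegrable _ volume (0 : ℝ) 1 from ⟨hc.1.re, hc.2.re⟩).congr fun t ht => ?_
  rw [Set.uIoc_of_le zero_le_one] at ht
  simp only [betaIntegrand_ofReal a b (Set.Ioc_subset_Icc_self ht), RCLike.re_to_complex,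
    Complex.ofReal_re]

lemma Beta_le_Beta_of_le_left {b x y : ℝ} (hb : 0 < b) (hx : 0 < x) (hxy : x ≤ y) :
    Beta y b ≤ Beta x b := by
  refine intervalIntegral.integral_mono_on_of_le_Ioo zero_le_one
    (intervalIntegrable_betaIntegrand (hx.trans_le hxy) hb) (intervalIntegrable_betaIntegrand hx hb)
    fun t ht => mul_le_mul_of_nonneg_right (rpow_le_rpow_of_exponent_ge ht.1 ht.2.le (by linarith))
    (rpow_nonneg (sub_nonneg.2 ht.2.le) _)

lemma Beta_mul_Beta_add_half {x : ℝ} (hx : 0 < x) :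
    Beta x (1 / 2) * Beta (x + 1 / 2) (1 / 2) = π / x := by
  rw [Beta_eq_beta hx one_half_pos, Beta_eq_beta (by positivity) one_half_pos,
    ProbabilityTheory.beta, ProbabilityTheory.beta, add_assoc, add_halves,
    Gamma_add_one hx.ne', Gamma_one_half_eq]
  have := (Gamma_pos_of_pos hx).ne'
  have := (Gamma_pos_of_pos (by positivity : 0 < x + 1 / 2)).ne'
  field_simp
  rw [sq_sqrt pi_pos.le]

lemma Beta_half_half : Beta (1 / 2) (1 / 2) = π := by
  rw [Beta_eq_beta one_half_pos one_half_pos, ProbabilityTheory.beta, add_halves, Gamma_one,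
    Gamma_one_half_eq, div_one, mul_self_sqrt pi_pos.le]

lemma pi_div_le_Beta_sq {x : ℝ} (hx : 0 < x) : π / x ≤ Beta x (1 / 2) ^ 2 := by
  rw [← Beta_mul_Beta_add_half hx, sq]
  exact mul_le_mul_of_nonneg_left (Beta_le_Beta_of_le_left one_half_pos hx (by linarith))
    (Beta_pos hx one_half_pos).le

lemma Beta_sq_le_pi_div {x : ℝ} (hx : 1 / 2 < x) : Beta x (1 / 2) ^ 2 ≤ π / (x - 1 / 2) := by
  have hx' : 0 < x - 1 / 2 := by linarith
  have h := Beta_mul_Beta_add_half hx'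
  rw [sub_add_cancel] at h
  rw [← h, sq]
  exact mul_le_mul_of_nonneg_right (Beta_le_Beta_of_le_left one_half_pos hx' (by linarith))
    (Beta_pos (by linarith) one_half_pos).le

lemma one_div_sqrt_le_Beta {d : ℝ} (hd : 1 < d) : 1 / √d ≤ Beta ((d - 1) / 2) (1 / 2) := by
  rw [one_div, ← sqrt_inv, sqrt_le_left (Beta_pos (by linarith) one_half_pos).le]
  calc d⁻¹ ≤ π / ((d - 1) / 2) := by
        rw [inv_eq_one_div, div_le_div_iff₀ (by linarith) (by linarith)]
        nlinarith [pi_gt_three]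
    _ ≤ Beta ((d - 1) / 2) (1 / 2) ^ 2 := pi_div_le_Beta_sq (by linarith)

lemma Beta_sq_le_two_pi_div {d : ℝ} (hd : 2 < d) :
    Beta ((d - 1) / 2) (1 / 2) ^ 2 ≤ 2 * π / (d - 2) := by
  convert Beta_sq_le_pi_div (x := (d - 1) / 2) (by linarith) using 1
  field_simp
  ring

/-- **Lemma (bounds on `B((d−1)/2, 1/2)`)**: for every `d ≥ 2`,
`B((d−1)/2,1/2) ∈ [1/√d, π]`, and for `d ≥ 5`, `B((d−1)/2,1/2) ∈ [1/√d, 4/√(d−3)]`. -/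
theorem beta_bounds (d : ℕ) (hd2 : 2 ≤ d) :
    Beta (((d : ℝ) - 1) / 2) (1 / 2) ∈ Set.Icc (1 / Real.sqrt d) π ∧
      (5 ≤ d →
        Beta (((d : ℝ) - 1) / 2) (1 / 2) ∈
          Set.Icc (1 / Real.sqrt d) (4 / Real.sqrt ((d : ℝ) - 3))) := by
  have hd : (2 : ℝ) ≤ d := by exact_mod_cast hd2
  have hlower := one_div_sqrt_le_Beta (d := d) (by linarith)
  refine ⟨⟨hlower, ?_⟩, fun hd5 => ⟨hlower, ?_⟩⟩
  · rcases hd2.eq_or_lt with rfl | hd3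
    · norm_num [Beta_half_half]
    · have hd3 : (3 : ℝ) ≤ d := by exact_mod_cast hd3
      refine (pow_le_pow_iff_left₀ (Beta_pos (by linarith) one_half_pos).le pi_pos.le
        two_ne_zero).1 ((Beta_sq_le_two_pi_div (by linarith)).trans ?_)
      rw [div_le_iff₀ (by linarith)]
      nlinarith [pi_gt_three]
  · have hd5 : (5 : ℝ) ≤ d := by exact_mod_cast hd5
    rw [show (4 : ℝ) / √(d - 3) = √(16 / (d - 3)) by
      rw [sqrt_div' _ (by linarith), show (16 : ℝ) = 4 ^ 2 by norm_num, sqrt_sq (by norm_num)]]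
    refine le_sqrt_of_sq_le ((Beta_sq_le_two_pi_div (by linarith)).trans ?_)
    rw [div_le_div_iff₀ (by linarith) (by linarith)]
    nlinarith [pi_lt_four]
end
end

section
/- Fix training inputs X₁,…,Xₙ ∈ S^{d-1}, an index i ∈ {1,…,n}, and v* ∈ S^{d-1} with v*ᵀX_i = 0; set r_i := min_{j ≠ i} |v*ᵀX_j|. Suppose there exist k, l ∈ {1,…,p} such that V₀[k]/‖V₀[k]‖₂ lies in B⁺ := {v ∈ S^{d-1} : ‖v − v*‖₂ < r_i and X_iᵀv > 0} and V₀[l]/‖V₀[l]‖₂ lies in B⁻ := {v ∈ S^{d-1} : ‖v − v*‖₂ < r_i and X_iᵀv < 0}. Then the j-th block rows of H satisfy: H_j[k] = H_j[l] for every j ∈ {1,…,n} \ {i}, H_i[k] = X_iᵀ, and H_i[l] = 0. -/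
open MeasureTheory ProbabilityTheory Real Matrix
open scoped ENNReal RealInnerProductSpace Classical

noncomputable section

/-! Activation signs are unchanged by normalising `V₀[m]`. For `j ≠ i`, any direction within
`r_i ≤ |⟪v*, X_j⟫|` of `v*` has, by Cauchy–Schwarz, the same sign against `X_j` as `v*`; so
neurons `k` and `l` fire together on every `X_j` with `j ≠ i`, while on `X_i` their signs are
prescribed by the two halves of the cap. -/

theorem pos_iff_pos_of_abs_sub_lt_abs {a b : ℝ} (h : |a - b| < |b|) : 0 < a ↔ 0 < b := by
  rcases abs_lt.mp h with ⟨h₁, h₂⟩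
  rcases le_or_gt b 0 with hb | hb
  · rw [abs_of_nonpos hb] at h₁ h₂
    constructor <;> intro <;> linarith
  · exact iff_of_true (by rw [abs_of_pos hb] at h₁; linarith) hb

section InnerProductSpace

variable {E : Type*} [NormedAddCommGroup E] [InnerProductSpace ℝ E]

theorem inner_pos_iff_of_norm_sub_lt_abs_inner {x u w : E} (hx : ‖x‖ ≤ 1)
    (h : ‖u - w‖ < |⟪x, w⟫|) : 0 < ⟪x, u⟫ ↔ 0 < ⟪x, w⟫ := by
  refine pos_iff_pos_of_abs_sub_lt_abs (lt_of_le_of_lt ?_ h)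
  calc |⟪x, u⟫ - ⟪x, w⟫| = |⟪x, u - w⟫| := by rw [inner_sub_right]
    _ ≤ ‖x‖ * ‖u - w‖ := abs_real_inner_le_norm _ _
    _ ≤ ‖u - w‖ := mul_le_of_le_one_left (norm_nonneg _) hx

end InnerProductSpace

theorem inner_dir_pos_iff {d : ℕ} (x v : EuclideanSpace ℝ (Fin d)) :
    0 < ⟪x, dir v⟫ ↔ 0 < ⟪x, v⟫ := by
  rcases eq_or_ne v 0 with rfl | hv
  · simp [dir]
  · rw [dir, real_inner_smul_right, mul_pos_iff_of_pos_left (inv_pos.mpr (norm_pos_iff.mpr hv))]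

theorem hrow_apply_eq_of_inner_pos_iff {d p : ℕ} {V : Fin p → EuclideanSpace ℝ (Fin d)}
    {x : EuclideanSpace ℝ (Fin d)} {k l : Fin p} (h : 0 < ⟪x, V k⟫ ↔ 0 < ⟪x, V l⟫) (c : Fin d) :
    hrow V x (k, c) = hrow V x (l, c) := by
  simp only [hrow, h]

theorem cap_splitting_blocks_general
    (d n p : ℕ)
    (X : Fin n → EuclideanSpace ℝ (Fin d))
    (hX : ∀ i, X i ∈ Metric.sphere (0 : EuclideanSpace ℝ (Fin d)) 1)
    (V : Fin p → EuclideanSpace ℝ (Fin d))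
    (i : Fin n)
    (vstar : EuclideanSpace ℝ (Fin d))
    (r : ℝ) (hr : r = ⨅ j : {j : Fin n // j ≠ i}, |⟪vstar, X (j : Fin n)⟫|)
    (k l : Fin p)
    (hk : ‖dir (V k) - vstar‖ < r ∧ 0 < ⟪X i, dir (V k)⟫)
    (hl : ‖dir (V l) - vstar‖ < r ∧ ⟪X i, dir (V l)⟫ < 0) :
    (∀ j : Fin n, j ≠ i → ∀ c : Fin d, Hmat V X j (k, c) = Hmat V X j (l, c)) ∧
      (∀ c : Fin d, Hmat V X i (k, c) = X i c) ∧
      (∀ c : Fin d, Hmat V X i (l, c) = 0) := by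
  have hr_le : ∀ j ≠ i, r ≤ |⟪X j, vstar⟫| := fun j hj => by
    rw [hr, real_inner_comm]
    exact ciInf_le (Finite.bddBelow_range fun j : {j // j ≠ i} => |⟪vstar, X j⟫|) ⟨j, hj⟩
  have hcap : ∀ m, ‖dir (V m) - vstar‖ < r → ∀ j ≠ i, (0 < ⟪X j, V m⟫ ↔ 0 < ⟪X j, vstar⟫) :=
    fun m hm j hj => by
      rw [← inner_dir_pos_iff]
      exact inner_pos_iff_of_norm_sub_lt_abs_inner (mem_sphere_zero_iff_norm.mp (hX j)).le
        (hm.trans_le (hr_le j hj))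
  refine ⟨fun j hj => hrow_apply_eq_of_inner_pos_iff ?_, fun c => ?_, fun c => ?_⟩
  · rw [hcap k hk.1 j hj, hcap l hl.1 j hj]
  · simp [Hmat, hrow, (inner_dir_pos_iff _ _).mp hk.2]
  · simp [Hmat, hrow, (inner_dir_pos_iff _ _).not.mp hl.2.not_gt]

/-- **Lemma (splitting a cap around a vector orthogonal to `X_i`)**: if the directions of
`V₀[k]` and `V₀[l]` lie in the two halves (with respect to the sign of `X_iᵀ·`) of the cap
of radius `r_i = min_{j ≠ i} |v*ᵀX_j|` around `v*` (where `v*ᵀX_i = 0`), then the `k`-th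
and `l`-th blocks of all rows of `H` other than the `i`-th agree, the `k`-th block of the
`i`-th row is `X_iᵀ`, and the `l`-th block of the `i`-th row is `0`. -/
theorem cap_splitting_blocks
    (d n p : ℕ) (hd2 : 2 ≤ d)
    (X : Fin n → EuclideanSpace ℝ (Fin d))
    (hX : ∀ i, X i ∈ Metric.sphere (0 : EuclideanSpace ℝ (Fin d)) 1)
    (V : Fin p → EuclideanSpace ℝ (Fin d)) (hV : ∀ j, V j ≠ 0)
    (i : Fin n)
    (vstar : EuclideanSpace ℝ (Fin d))
    (hvs : vstar ∈ Metric.sphere (0 : EuclideanSpace ℝ (Fin d)) 1)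
    (hvsXi : ⟪vstar, X i⟫ = 0)
    (r : ℝ) (hr : r = ⨅ j : {j : Fin n // j ≠ i}, |⟪vstar, X (j : Fin n)⟫|)
    (k l : Fin p)
    (hk : ‖dir (V k) - vstar‖ < r ∧ 0 < ⟪X i, dir (V k)⟫)
    (hl : ‖dir (V l) - vstar‖ < r ∧ ⟪X i, dir (V l)⟫ < 0) :
    (∀ j : Fin n, j ≠ i → ∀ c : Fin d, Hmat V X j (k, c) = Hmat V X j (l, c)) ∧
      (∀ c : Fin d, Hmat V X i (k, c) = X i c) ∧
      (∀ c : Fin d, Hmat V X i (l, c) = 0) :=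
  cap_splitting_blocks_general d n p X hX V i vstar r hr k l hk hl
end
end

section
/- Let X₁,…,X_k be i.i.d. random vectors taking values in a finite-dimensional real inner product space with ‖X_i‖₂ ≤ U almost surely for some constant U > 0. Then for every q ∈ [1, ∞), the probability that ‖(1/k)·Σ_{i=1}^k X_i − E[X₁]‖₂ ≥ k^{1/(2q) − 1/2} is strictly less than 2e²·exp(−k^{1/q}/(8U²)). -/
/-!
Centre the vectors, `Y i = X i - 𝔼 X₁`, so that `‖Y i‖ ≤ 2U`. If `Y` is centred, bounded by `b`
and independent of `S`, then `𝔼 cosh (L ‖S + Y‖) ≤ 𝔼 cosh (L ‖S‖) · cosh (L b)` (Pinelis): by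
convexity of `u ↦ cosh √u`, `cosh (L ‖v + y‖)` is bounded by `cosh (L ‖v‖) cosh (L b)` plus a
multiple of `⟪v, y⟫`, which averages out. Iterating gives
`𝔼 cosh (L ‖∑ Y i‖) ≤ cosh (L b) ^ k ≤ exp (k L² b² / 2)`, and Chernoff's bound with the optimal
`L` yields `P(‖∑ Y i‖ ≥ t) ≤ 2 exp (-t² / (8 k U²))`. At `t = k · k ^ (1/(2q) - 1/2)` the exponent
is `k ^ (1/q) / (8 U²)`, and `2 < 2 e²`.
-/

open MeasureTheory ProbabilityTheory Real
open scoped InnerProductSpace Finset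

namespace Real

lemma sinh_le_mul_cosh {s : ℝ} (hs : 0 ≤ s) : sinh s ≤ s * cosh s := by
  have hmono : Monotone fun t : ℝ => t * cosh t - sinh t := by
    refine monotone_of_deriv_nonneg (by fun_prop) fun t => ?_
    have hderiv : HasDerivAt (fun t : ℝ => t * cosh t - sinh t) (t * sinh t) t := by
      refine (((hasDerivAt_id' t).mul (hasDerivAt_cosh t)).sub (hasDerivAt_sinh t)).congr_deriv ?_
      ring
    rw [hderiv.deriv]
    rcases le_total 0 t with ht | ht
    · exact mul_nonneg ht (sinh_nonneg_iff.2 ht)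
    · exact mul_nonneg_of_nonpos_of_nonpos ht (sinh_nonpos_iff.2 ht)
  simpa using hmono hs

lemma convexOn_cosh_sqrt : ConvexOn ℝ (Set.Ici 0) fun u => cosh √u := by
  refine convexOn_of_hasDerivWithinAt2_nonneg (convex_Ici 0)
    (f' := fun u => sinh √u / (2 * √u))
    (f'' := fun u => (cosh √u - sinh √u / √u) / (4 * u)) (by fun_prop) ?_ ?_ ?_ <;>
    rw [interior_Ici] <;> intro u (hu : 0 < u) <;> have hsqrt : 0 < √u := sqrt_pos.2 hu
  · refine (((hasDerivAt_cosh √u).comp u (hasDerivAt_sqrt hu.ne')).congr_deriv ?_).hasDerivWithinAt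
    ring
  · have hsq : (2 * √u) ^ 2 = 4 * u := by rw [mul_pow, sq_sqrt hu.le]; norm_num
    refine ((((hasDerivAt_sinh √u).comp u (hasDerivAt_sqrt hu.ne')).div
      ((hasDerivAt_sqrt hu.ne').const_mul 2) (by positivity)).congr_deriv ?_).hasDerivWithinAt
    rw [hsq, Function.comp_apply]
    field_simp
  · have : sinh √u / √u ≤ cosh √u := by
      rw [div_le_iff₀ hsqrt, mul_comm]
      exact sinh_le_mul_cosh hsqrt.le
    have : 0 ≤ cosh √u - sinh √u / √u := by linarith
    positivity

/-- `α² + 2αβc + β²` is the convex combination of `(α - β)²` and `(α + β)²` with weights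
`(1 - c) / 2` and `(1 + c) / 2`, so this is Jensen's inequality for `u ↦ cosh √u`. -/
lemma cosh_sqrt_law_of_cosines_le (α β : ℝ) {c : ℝ} (hc : |c| ≤ 1) :
    cosh √(α ^ 2 + 2 * α * β * c + β ^ 2) ≤ cosh α * cosh β + c * sinh α * sinh β := by
  obtain ⟨hc₁, hc₂⟩ := abs_le.1 hc
  have hjensen := convexOn_cosh_sqrt.2 (Set.mem_Ici.2 (sq_nonneg (α - β)))
    (Set.mem_Ici.2 (sq_nonneg (α + β))) (show 0 ≤ (1 - c) / 2 by linarith)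
    (show 0 ≤ (1 + c) / 2 by linarith) (by ring)
  simp only [smul_eq_mul, sqrt_sq_eq_abs, cosh_abs, cosh_sub, cosh_add] at hjensen
  rw [show α ^ 2 + 2 * α * β * c + β ^ 2 = (1 - c) / 2 * (α - β) ^ 2 + (1 + c) / 2 * (α + β) ^ 2
    by ring]
  exact hjensen.trans_eq (by ring)

lemma exp_le_two_mul_cosh (x : ℝ) : exp x ≤ 2 * cosh x := by
  rw [cosh_eq]
  linarith [exp_pos (-x)]

lemma neg_mul_add_mul_sq_div_two (t n b : ℝ) :
    -(t / (n * b ^ 2)) * t + n * (t / (n * b ^ 2) * b) ^ 2 / 2 = -t ^ 2 / (2 * n * b ^ 2) := by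
  rcases eq_or_ne (n * b ^ 2) 0 with h | h
  · have : 2 * n * b ^ 2 = 0 := by linear_combination 2 * h
    simp [h, this]
  · field_simp
    ring

lemma mul_rpow_sq_eq_rpow_one_div {k : ℝ} (hk : 0 < k) (q : ℝ) :
    k * (k ^ (1 / (2 * q) - 1 / 2)) ^ 2 = k ^ (1 / q) := by
  rw [← rpow_natCast, ← rpow_mul hk.le]
  nth_rw 1 [← rpow_one k]
  rw [← rpow_add hk]
  congr 1
  push_cast
  ring

end Real

section SeminormedAddCommGroup

variable {E : Type*} [SeminormedAddCommGroup E]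

lemma cosh_mul_norm_le_cosh_mul {L c : ℝ} (hL : 0 ≤ L) {x : E} (hx : ‖x‖ ≤ c) :
    cosh (L * ‖x‖) ≤ cosh (L * c) := by
  have hc : 0 ≤ c := (norm_nonneg x).trans hx
  rw [cosh_le_cosh, abs_of_nonneg (by positivity), abs_of_nonneg (by positivity)]
  exact mul_le_mul_of_nonneg_left hx hL

variable {Ω : Type*} {_ : MeasurableSpace Ω} {μ : Measure Ω}

lemma integrable_cosh_mul_norm [IsFiniteMeasure μ] {L R : ℝ} (hL : 0 ≤ L) {f : Ω → E}
    (hf : AEStronglyMeasurable f μ) (hbd : ∀ᵐ ω ∂μ, ‖f ω‖ ≤ R) :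
    Integrable (fun ω => cosh (L * ‖f ω‖)) μ := by
  refine .of_bound (by fun_prop) (cosh (L * R)) ?_
  filter_upwards [hbd] with ω hω
  rw [norm_of_nonneg (cosh_pos _).le]
  exact cosh_mul_norm_le_cosh_mul hL hω

lemma ae_norm_sum_le_card_mul {ι : Type*} {Y : ι → Ω → E} {b : ℝ}
    (hbd : ∀ i, ∀ᵐ ω ∂μ, ‖Y i ω‖ ≤ b) (s : Finset ι) :
    ∀ᵐ ω ∂μ, ‖∑ i ∈ s, Y i ω‖ ≤ #s * b := by
  filter_upwards [(Filter.eventually_all_finset s).2 fun i _ => hbd i] with ω hω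
  calc ‖∑ i ∈ s, Y i ω‖ ≤ ∑ i ∈ s, ‖Y i ω‖ := norm_sum_le _ _
    _ ≤ ∑ _i ∈ s, b := Finset.sum_le_sum hω
    _ = #s * b := by rw [Finset.sum_const, nsmul_eq_mul]

end SeminormedAddCommGroup

lemma le_norm_inv_card_smul_sum_sub_iff {ι E : Type*} [SeminormedAddCommGroup E]
    [NormedSpace ℝ E] {s : Finset ι} (hs : s.Nonempty) (x : ι → E) (m : E) (ε : ℝ) :
    ε ≤ ‖(#s : ℝ)⁻¹ • (∑ i ∈ s, x i) - m‖ ↔ #s * ε ≤ ‖∑ i ∈ s, (x i - m)‖ := by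
  have hcard : (0 : ℝ) < #s := Nat.cast_pos.2 hs.card_pos
  have hcentre : (#s : ℝ)⁻¹ • (∑ i ∈ s, x i) - m = (#s : ℝ)⁻¹ • ∑ i ∈ s, (x i - m) := by
    rw [Finset.sum_sub_distrib, smul_sub, Finset.sum_const, ← Nat.cast_smul_eq_nsmul ℝ, smul_smul,
      inv_mul_cancel₀ hcard.ne', one_smul]
  rw [hcentre, norm_smul, norm_inv, RCLike.norm_natCast, inv_mul_eq_div, le_div_iff₀ hcard,
    mul_comm]

section InnerProductSpace

variable {E : Type*} [NormedAddCommGroup E] [InnerProductSpace ℝ E]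

/-- With `c = ⟪v, y⟫ / (‖v‖ b)` we have `|c| ≤ 1` and `‖v + y‖² ≤ ‖v‖² + 2 ‖v‖ b c + b²`
(if `‖v‖ b = 0`, then `c = 0` by the convention `x / 0 = 0`, and `⟪v, y⟫ = 0` as well). -/
lemma cosh_mul_norm_add_le {L b : ℝ} (hL : 0 ≤ L) (v : E) {y : E} (hy : ‖y‖ ≤ b) :
    cosh (L * ‖v + y‖) ≤ cosh (L * ‖v‖) * cosh (L * b)
      + sinh (L * ‖v‖) * sinh (L * b) / (‖v‖ * b) * ⟪v, y⟫_ℝ := by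
  have hb : 0 ≤ b := (norm_nonneg y).trans hy
  have hinner : |⟪v, y⟫_ℝ| ≤ ‖v‖ * b :=
    (abs_real_inner_le_norm v y).trans (mul_le_mul_of_nonneg_left hy (norm_nonneg v))
  set c := ⟪v, y⟫_ℝ / (‖v‖ * b)
  have hc : |c| ≤ 1 := by
    rw [abs_div, abs_of_nonneg (mul_nonneg (norm_nonneg v) hb)]
    exact div_le_one_of_le₀ hinner (by positivity)
  have hvc : ‖v‖ * b * c = ⟪v, y⟫_ℝ := by
    rcases (mul_nonneg (norm_nonneg v) hb).eq_or_lt with h | h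
    · rw [← h, zero_mul, eq_comm, ← abs_nonpos_iff, h]
      exact hinner
    · exact mul_div_cancel₀ _ h.ne'
  have hnorm : L * ‖v + y‖ ≤ √((L * ‖v‖) ^ 2 + 2 * (L * ‖v‖) * (L * b) * c + (L * b) ^ 2) := by
    refine le_sqrt_of_sq_le ?_
    have : ‖v + y‖ ^ 2 ≤ ‖v‖ ^ 2 + 2 * ⟪v, y⟫_ℝ + b ^ 2 := by
      rw [norm_add_sq_real]
      gcongr
    rw [← hvc] at this
    nlinarith [mul_le_mul_of_nonneg_left this (sq_nonneg L)]
  calc cosh (L * ‖v + y‖)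
      ≤ cosh √((L * ‖v‖) ^ 2 + 2 * (L * ‖v‖) * (L * b) * c + (L * b) ^ 2) := by
        rw [cosh_le_cosh, abs_of_nonneg (by positivity), abs_of_nonneg (sqrt_nonneg _)]
        exact hnorm
    _ ≤ cosh (L * ‖v‖) * cosh (L * b) + c * sinh (L * ‖v‖) * sinh (L * b) :=
        cosh_sqrt_law_of_cosines_le _ _ hc
    _ = _ := by ring

variable [CompleteSpace E] [SecondCountableTopology E] [MeasurableSpace E] [BorelSpace E]

lemma integral_cosh_mul_norm_const_add_le {L b : ℝ} (hL : 0 ≤ L) (ν : Measure E)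
    [IsProbabilityMeasure ν] (hmean : ∫ y, y ∂ν = 0) (hbd : ∀ᵐ y ∂ν, ‖y‖ ≤ b) (v : E) :
    ∫ y, cosh (L * ‖v + y‖) ∂ν ≤ cosh (L * ‖v‖) * cosh (L * b) := by
  have hid : Integrable (fun y => y) ν := .of_bound aestronglyMeasurable_id b hbd
  have hlin : Integrable (fun y => sinh (L * ‖v‖) * sinh (L * b) / (‖v‖ * b) * ⟪v, y⟫_ℝ) ν :=
    (hid.const_inner v).const_mul _
  have hcosh : Integrable (fun y => cosh (L * ‖v + y‖)) ν := by
    refine integrable_cosh_mul_norm hL (by fun_prop) (R := ‖v‖ + b) ?_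
    filter_upwards [hbd] with y hy
    exact (norm_add_le v y).trans (by linarith)
  calc ∫ y, cosh (L * ‖v + y‖) ∂ν
      ≤ ∫ y, (cosh (L * ‖v‖) * cosh (L * b)
        + sinh (L * ‖v‖) * sinh (L * b) / (‖v‖ * b) * ⟪v, y⟫_ℝ) ∂ν := by
        refine integral_mono_ae hcosh ((integrable_const _).add hlin) ?_
        filter_upwards [hbd] with y hy
        exact cosh_mul_norm_add_le hL v hy
    _ = cosh (L * ‖v‖) * cosh (L * b) := by
        rw [integral_add (integrable_const _) hlin, integral_const, integral_const_mul,
          integral_inner hid, hmean]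
        simp

end InnerProductSpace

namespace ProbabilityTheory

variable {E : Type*} [NormedAddCommGroup E] [InnerProductSpace ℝ E] [CompleteSpace E]
  [SecondCountableTopology E] [MeasurableSpace E] [BorelSpace E]
  {Ω : Type*} {_ : MeasurableSpace Ω} {μ : Measure Ω} [IsProbabilityMeasure μ]

lemma IndepFun.integral_cosh_mul_norm_add_le {L b R : ℝ} (hL : 0 ≤ L) {S Y : Ω → E}
    (hS : Measurable S) (hY : Measurable Y) (hindep : IndepFun S Y μ)
    (hmean : ∫ ω, Y ω ∂μ = 0) (hbdS : ∀ᵐ ω ∂μ, ‖S ω‖ ≤ R) (hbdY : ∀ᵐ ω ∂μ, ‖Y ω‖ ≤ b) :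
    ∫ ω, cosh (L * ‖S ω + Y ω‖) ∂μ ≤ (∫ ω, cosh (L * ‖S ω‖) ∂μ) * cosh (L * b) := by
  set μS := μ.map S
  set ν := μ.map Y
  have : IsProbabilityMeasure ν := Measure.isProbabilityMeasure_map hY.aemeasurable
  have hprod : μ.map (fun ω => (S ω, Y ω)) = μS.prod ν :=
    (indepFun_iff_map_prod_eq_prod_map_map hS.aemeasurable hY.aemeasurable).1 hindep
  have hmeanν : ∫ y, y ∂ν = 0 :=
    (integral_map hY.aemeasurable aestronglyMeasurable_id).trans hmean
  have hbdν : ∀ᵐ y ∂ν, ‖y‖ ≤ b :=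
    (ae_map_iff hY.aemeasurable (measurableSet_le measurable_norm measurable_const)).2 hbdY
  have hcoshS : Integrable (fun x => cosh (L * ‖x‖)) μS := by
    rw [integrable_map_measure (by fun_prop) hS.aemeasurable]
    exact integrable_cosh_mul_norm hL hS.aestronglyMeasurable hbdS
  have hcoshSY : Integrable (fun p : E × E => cosh (L * ‖p.1 + p.2‖)) (μS.prod ν) := by
    rw [← hprod, integrable_map_measure (by fun_prop) (by fun_prop)]
    refine integrable_cosh_mul_norm hL (by fun_prop) (R := R + b) ?_
    filter_upwards [hbdS, hbdY] with ω hSω hYω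
    exact (norm_add_le _ _).trans (add_le_add hSω hYω)
  calc ∫ ω, cosh (L * ‖S ω + Y ω‖) ∂μ
      = ∫ p, cosh (L * ‖p.1 + p.2‖) ∂(μS.prod ν) := by
        rw [← hprod, integral_map (by fun_prop) (by fun_prop)]
    _ = ∫ x, ∫ y, cosh (L * ‖x + y‖) ∂ν ∂μS := integral_prod _ hcoshSY
    _ ≤ ∫ x, cosh (L * ‖x‖) * cosh (L * b) ∂μS :=
        integral_mono hcoshSY.integral_prod_left (hcoshS.mul_const _)
          fun x => integral_cosh_mul_norm_const_add_le hL ν hmeanν hbdν x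
    _ = (∫ ω, cosh (L * ‖S ω‖) ∂μ) * cosh (L * b) := by
        rw [integral_mul_const, integral_map hS.aemeasurable (by fun_prop)]

lemma iIndepFun.integral_cosh_mul_norm_sum_le {ι : Type*} {L b : ℝ} (hL : 0 ≤ L)
    {Y : ι → Ω → E} (hmeas : ∀ i, Measurable (Y i)) (hindep : iIndepFun Y μ)
    (hmean : ∀ i, ∫ ω, Y i ω ∂μ = 0) (hbd : ∀ i, ∀ᵐ ω ∂μ, ‖Y i ω‖ ≤ b) (s : Finset ι) :
    ∫ ω, cosh (L * ‖∑ i ∈ s, Y i ω‖) ∂μ ≤ cosh (L * b) ^ #s := by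
  induction s using Finset.cons_induction with
  | empty => simp
  | cons i s his ih =>
    have hbdS : ∀ᵐ ω ∂μ, ‖(∑ j ∈ s, Y j) ω‖ ≤ #s * b := by
      simpa only [Finset.sum_apply] using ae_norm_sum_le_card_mul hbd s
    have hstep := (hindep.indepFun_finsetSum_of_notMem hmeas his).integral_cosh_mul_norm_add_le
      hL (by fun_prop) (hmeas i) (hmean i) hbdS (hbd i)
    simp only [Finset.sum_apply] at hstep
    calc ∫ ω, cosh (L * ‖∑ j ∈ Finset.cons i s his, Y j ω‖) ∂μ
        = ∫ ω, cosh (L * ‖∑ j ∈ s, Y j ω + Y i ω‖) ∂μ := by simp only [Finset.sum_cons, add_comm]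
      _ ≤ (∫ ω, cosh (L * ‖∑ j ∈ s, Y j ω‖) ∂μ) * cosh (L * b) := hstep
      _ ≤ cosh (L * b) ^ #s * cosh (L * b) := by gcongr
      _ = cosh (L * b) ^ #(Finset.cons i s his) := by rw [Finset.card_cons, pow_succ]

/-- Pinelis' Hoeffding-type inequality for bounded independent centred random vectors. -/
theorem measureReal_norm_sum_ge_le_of_iIndepFun {ι : Type*} {b t : ℝ} (ht : 0 ≤ t)
    {Y : ι → Ω → E} (hmeas : ∀ i, Measurable (Y i)) (hindep : iIndepFun Y μ)
    (hmean : ∀ i, ∫ ω, Y i ω ∂μ = 0) (hbd : ∀ i, ∀ᵐ ω ∂μ, ‖Y i ω‖ ≤ b) (s : Finset ι) :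
    μ.real {ω | t ≤ ‖∑ i ∈ s, Y i ω‖} ≤ 2 * exp (-t ^ 2 / (2 * #s * b ^ 2)) := by
  -- `L` minimises the exponent `-L t + #s (L b)² / 2` of the Chernoff bound below.
  set L := t / (#s * b ^ 2)
  have hL₀ : 0 ≤ L := by positivity
  have hcosh :=
    (integrable_cosh_mul_norm hL₀ (by fun_prop) (ae_norm_sum_le_card_mul hbd s)).const_mul 2
  have hexp : Integrable (fun ω => exp (L * ‖∑ i ∈ s, Y i ω‖)) μ :=
    hcosh.mono' (by fun_prop) (.of_forall fun ω => by
      rw [norm_of_nonneg (exp_pos _).le]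
      exact exp_le_two_mul_cosh _)
  have hmgf : mgf (fun ω => ‖∑ i ∈ s, Y i ω‖) μ L ≤ 2 * cosh (L * b) ^ #s := calc
    mgf (fun ω => ‖∑ i ∈ s, Y i ω‖) μ L ≤ ∫ ω, 2 * cosh (L * ‖∑ i ∈ s, Y i ω‖) ∂μ :=
      integral_mono hexp hcosh fun ω => exp_le_two_mul_cosh _
    _ ≤ 2 * cosh (L * b) ^ #s := by
      rw [integral_const_mul]
      gcongr
      exact hindep.integral_cosh_mul_norm_sum_le hL₀ hmeas hmean hbd s
  calc μ.real {ω | t ≤ ‖∑ i ∈ s, Y i ω‖}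
      ≤ exp (-L * t) * mgf (fun ω => ‖∑ i ∈ s, Y i ω‖) μ L :=
        measure_ge_le_exp_mul_mgf t hL₀ hexp
    _ ≤ exp (-L * t) * (2 * exp (#s * (L * b) ^ 2 / 2)) := by
        gcongr
        refine hmgf.trans ?_
        rw [mul_div_assoc, exp_nat_mul]
        gcongr
        exact cosh_le_exp_half_sq _
    _ = 2 * exp (-t ^ 2 / (2 * #s * b ^ 2)) := by
        rw [mul_left_comm, ← exp_add, neg_mul_add_mul_sq_div_two]

end ProbabilityTheory

theorem iid_mean_deviation_bound_general
    {E : Type*} [NormedAddCommGroup E] [InnerProductSpace ℝ E] [FiniteDimensional ℝ E]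
    [MeasurableSpace E] [BorelSpace E]
    {Ω : Type*} [MeasureSpace Ω] [IsProbabilityMeasure (ℙ : Measure Ω)]
    (k : ℕ) (hk : 0 < k)
    (X : Fin k → Ω → E)
    (hmeas : ∀ i, Measurable (X i))
    (hindep : iIndepFun X ℙ)
    (hident : ∀ i, Measure.map (X i) ℙ = Measure.map (X ⟨0, hk⟩) ℙ)
    (U : ℝ)
    (hbound : ∀ i, ∀ᵐ ω ∂ℙ, ‖X i ω‖ ≤ U)
    (q : ℝ) :
    ℙ {ω | (k : ℝ) ^ (1 / (2 * q) - 1 / 2) ≤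
        ‖(1 / (k : ℝ)) • (∑ i, X i ω) - ∫ ω', X ⟨0, hk⟩ ω' ∂ℙ‖} <
      ENNReal.ofReal (2 * Real.exp 2 * Real.exp (-(k : ℝ) ^ (1 / q) / (8 * U ^ 2))) := by
  have : CompleteSpace E := FiniteDimensional.complete ℝ E
  have hk₀ : (0 : ℝ) < k := Nat.cast_pos.2 hk
  set m := ∫ ω, X ⟨0, hk⟩ ω ∂ℙ
  set ε := (k : ℝ) ^ (1 / (2 * q) - 1 / 2)
  have hmean (i : Fin k) : ∫ ω, X i ω - m ∂ℙ = 0 := by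
    rw [integral_sub (.of_bound (hmeas i).aestronglyMeasurable U (hbound i)) (integrable_const m),
      (IdentDistrib.mk (hmeas i).aemeasurable (hmeas _).aemeasurable (hident i)).integral_eq]
    simp [m]
  have hm : ‖m‖ ≤ U := by simpa using norm_integral_le_of_norm_le_const (hbound ⟨0, hk⟩)
  have hbd (i : Fin k) : ∀ᵐ ω ∂ℙ, ‖X i ω - m‖ ≤ 2 * U := by
    filter_upwards [hbound i] with ω hω
    linarith [norm_sub_le (X i ω) m]
  have hevent : {ω | ε ≤ ‖(1 / (k : ℝ)) • (∑ i, X i ω) - m‖}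
      = {ω | k * ε ≤ ‖∑ i, (X i ω - m)‖} := by
    ext ω
    simpa using le_norm_inv_card_smul_sum_sub_iff (Finset.univ_nonempty_iff.2 ⟨⟨0, hk⟩⟩)
      (X · ω) m ε
  have hpinelis := measureReal_norm_sum_ge_le_of_iIndepFun (t := k * ε) (by positivity)
    (fun i => (hmeas i).sub_const m)
    (hindep.comp (fun _ x => x - m) fun _ => measurable_id.sub_const m) hmean hbd Finset.univ
  rw [Finset.card_univ, Fintype.card_fin, show -(k * ε) ^ 2 = -(k * ε ^ 2) * k by ring,
    show 2 * (k : ℝ) * (2 * U) ^ 2 = 8 * U ^ 2 * k by ring, mul_div_mul_right _ _ hk₀.ne',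
    mul_rpow_sq_eq_rpow_one_div hk₀] at hpinelis
  rw [hevent, ← ofReal_measureReal]
  refine (ENNReal.ofReal_le_ofReal hpinelis).trans_lt
    ((ENNReal.ofReal_lt_ofReal_iff (by positivity)).2 ?_)
  rw [mul_right_comm]
  exact lt_mul_of_one_lt_right (by positivity) (one_lt_exp_iff.2 two_pos)

/-- **Lemma (deviation of the empirical mean of bounded i.i.d. random vectors)**:
if `X₁,…,X_k` are i.i.d. random vectors in a finite-dimensional real inner product space
with `‖X_i‖ ≤ U` a.s., then for every `q ∈ [1,∞)`,
`P(‖(1/k)Σ X_i − E[X₁]‖ ≥ k^{1/(2q)−1/2}) < 2e²·exp(−k^{1/q}/(8U²))`. -/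
theorem iid_mean_deviation_bound
    {E : Type*} [NormedAddCommGroup E] [InnerProductSpace ℝ E] [FiniteDimensional ℝ E]
    [MeasurableSpace E] [BorelSpace E]
    {Ω : Type*} [MeasureSpace Ω] [IsProbabilityMeasure (ℙ : Measure Ω)]
    (k : ℕ) (hk : 0 < k)
    (X : Fin k → Ω → E)
    (hmeas : ∀ i, Measurable (X i))
    (hindep : iIndepFun X ℙ)
    (hident : ∀ i, Measure.map (X i) ℙ = Measure.map (X ⟨0, hk⟩) ℙ)
    (U : ℝ) (hU : 0 < U)
    (hbound : ∀ i, ∀ᵐ ω ∂ℙ, ‖X i ω‖ ≤ U)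
    (q : ℝ) (hq : 1 ≤ q) :
    ℙ {ω | (k : ℝ) ^ (1 / (2 * q) - 1 / 2) ≤
        ‖(1 / (k : ℝ)) • (∑ i, X i ω) - ∫ ω', X ⟨0, hk⟩ ω' ∂ℙ‖} <
      ENNReal.ofReal (2 * Real.exp 2 * Real.exp (-(k : ℝ) ^ (1 / q) / (8 * U ^ 2))) :=
  iid_mean_deviation_bound_general k hk X hmeas hindep hident U hbound q
end
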